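/- Let V be a ℚ-algebra, let M be a left V-module, and let π₀, π₁, …, πₙ be idempotents in V such that πᵢ·πⱼ = 0 whenever i < j and such that (πⱼ·πᵢ)·m = 0 for all m ∈ M whenever i ≠ j. Define inductively πᵢ⁽⁰⁾ := πᵢ and πᵢ⁽ʳ⁺¹⁾ := (1 − ½πₙ⁽ʳ⁾)⋯(1 − ½π₍ᵢ₊₁₎⁽ʳ⁾) · πᵢ⁽ʳ⁾ · (1 − ½π₍ᵢ₋₁₎⁽ʳ⁾)⋯(1 − ½π₀⁽ʳ⁾). Then for every r ≥ 0 and every i one has πᵢ⁽ʳ⁾·m = πᵢ·m for all m ∈ M. -/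

import Mathlib

/-!
Each Gram–Schmidt factor `1 - ½πⱼ` is invisible next to `πᵢ` on `M`: since `πᵢπⱼ` and `πⱼπᵢ`
act as zero for `j ≠ i`, one has `πᵢ(1 - ½πⱼ)·m = πᵢ·m` and `(1 - ½πⱼ)πᵢ·m = πᵢ·m`. Hence one
Gram–Schmidt step does not change the action of the `πᵢ`; in particular the cross products of
the `πᵢ⁽ʳ⁺¹⁾` still act as zero, and induction on the number of steps concludes.
-/

/-- One step of the non-commutative Gram–Schmidt process:
`gs n π i = (1 − ½πₙ)⋯(1 − ½π₍ᵢ₊₁₎) · πᵢ · (1 − ½π₍ᵢ₋₁₎)⋯(1 − ½π₀)`,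
where the factors in each product are taken with decreasing index from left to right. -/
def gs {V : Type*} [Ring V] [Algebra ℚ V] (n : ℕ) (π : ℕ → V) (i : ℕ) : V :=
  (((List.range (n - i)).map (fun k => (1 : V) - ((2 : ℚ)⁻¹) • π (n - k))).prod)
    * π i *
  (((List.range i).map (fun k => (1 : V) - ((2 : ℚ)⁻¹) • π (i - 1 - k))).prod)

/-- The `r`-th iterate of the non-commutative Gram–Schmidt process:
`πᵢ⁽⁰⁾ := πᵢ` and `πᵢ⁽ʳ⁺¹⁾ := (1 − ½πₙ⁽ʳ⁾)⋯(1 − ½π₍ᵢ₊₁₎⁽ʳ⁾)·πᵢ⁽ʳ⁾·(1 − ½π₍ᵢ₋₁₎⁽ʳ⁾)⋯(1 − ½π₀⁽ʳ⁾)`. -/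
def gsIter {V : Type*} [Ring V] [Algebra ℚ V] (n : ℕ) (π : ℕ → V) : ℕ → ℕ → V
  | 0 => π
  | r + 1 => gs n (gsIter n π r)

section Action

variable {R V M : Type*} [CommSemiring R] [Ring V] [Algebra R V] [AddCommGroup M] [Module V M]

lemma mul_one_sub_smul_smul_of_mul_smul_eq_zero {a b : V} (c : R)
    (h : ∀ m : M, (a * b) • m = 0) (m : M) : (a * (1 - c • b)) • m = a • m := by
  rw [mul_sub, mul_one, mul_smul_comm, sub_smul, Algebra.smul_def, mul_smul, h, smul_zero,
    sub_zero]

lemma one_sub_smul_mul_smul_of_mul_smul_eq_zero {a b : V} (c : R)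
    (h : ∀ m : M, (b * a) • m = 0) (m : M) : ((1 - c • b) * a) • m = a • m := by
  rw [sub_mul, one_mul, smul_mul_assoc, sub_smul, Algebra.smul_def, mul_smul, h, smul_zero,
    sub_zero]

end Action

section ListProd

variable {V M : Type*} [Ring V] [AddCommGroup M] [Module V M]

lemma mul_list_prod_smul {a : V} {l : List V} (h : ∀ x ∈ l, ∀ m : M, (a * x) • m = a • m)
    (m : M) : (a * l.prod) • m = a • m := by
  induction l generalizing m with
  | nil => simp
  | cons x l ih =>
    rw [List.prod_cons, ← mul_assoc, mul_smul, h x List.mem_cons_self, ← mul_smul,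
      ih (fun y hy => h y (List.mem_cons_of_mem x hy))]

lemma list_prod_mul_smul {a : V} {l : List V} (h : ∀ x ∈ l, ∀ m : M, (x * a) • m = a • m)
    (m : M) : (l.prod * a) • m = a • m := by
  induction l with
  | nil => simp
  | cons x l ih =>
    rw [List.prod_cons, mul_assoc, mul_smul, ih (fun y hy => h y (List.mem_cons_of_mem x hy)),
      ← mul_smul, h x List.mem_cons_self]

end ListProd

lemma gs_smul {V M : Type*} [Ring V] [Algebra ℚ V] [AddCommGroup M] [Module V M]
    {n : ℕ} {σ : ℕ → V} (hcross : ∀ a b, a ≤ n → b ≤ n → a ≠ b → ∀ m : M, (σ b * σ a) • m = 0)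
    {i : ℕ} (hi : i ≤ n) (m : M) : gs n σ i • m = σ i • m := by
  have hright : (σ i * ((List.range i).map
      (fun k => (1 : V) - ((2 : ℚ)⁻¹) • σ (i - 1 - k))).prod) • m = σ i • m := by
    refine mul_list_prod_smul (fun x hx m' => ?_) m
    obtain ⟨k, hk, rfl⟩ := List.mem_map.mp hx
    exact mul_one_sub_smul_smul_of_mul_smul_eq_zero _
      (hcross _ _ (by omega) hi (by grind)) m'
  have hleft : (((List.range (n - i)).map
      (fun k => (1 : V) - ((2 : ℚ)⁻¹) • σ (n - k))).prod * σ i) • m = σ i • m := by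
    refine list_prod_mul_smul (fun x hx m' => ?_) m
    obtain ⟨k, hk, rfl⟩ := List.mem_map.mp hx
    exact one_sub_smul_mul_smul_of_mul_smul_eq_zero _
      (hcross _ _ hi (by omega) (by grind)) m'
  rw [gs, mul_assoc, mul_smul, hright, ← mul_smul, hleft]

theorem stmt_5 {V : Type*} [Ring V] [Algebra ℚ V]
    (M : Type*) [AddCommGroup M] [Module V M] (n : ℕ) (π : ℕ → V)
    (hact : ∀ i j, i ≤ n → j ≤ n → i ≠ j → ∀ m : M, (π j * π i) • m = 0) :
    ∀ r : ℕ, ∀ i, i ≤ n → ∀ m : M, gsIter n π r i • m = π i • m := by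
  intro r
  induction r with
  | zero => exact fun _ _ _ => rfl
  | succ r ih =>
    have hcross : ∀ a b, a ≤ n → b ≤ n → a ≠ b → ∀ m : M,
        (gsIter n π r b * gsIter n π r a) • m = 0 := by
      intro a b ha hb hab m
      rw [mul_smul, ih a ha, ih b hb, ← mul_smul]
      exact hact a b ha hb hab m
    intro i hi m
    rw [gsIter, gs_smul hcross hi, ih i hi]
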